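/- arXiv:2509.06764 — 2 statements merged into one kernel-verified Lean document; each statement's English description precedes it below -/
import Mathlib

section
/- Let R = Q[ψ₁, ψ₂, Δ]/(ψ₁², ψ₂², 2Δψ₁ − ψ₁ψ₂, Δ(ψ₁ − ψ₂), 2Δ² + ψ₁ψ₂), with all generators in degree 1. Then R has Q-dimension 5, with linear basis {1, ψ₁, ψ₂, Δ, ψ₁ψ₂}. -/
/-!
Lemma (Chow ring of `C_* ×_{M_*} C_*`, algebraic part):
`R = ℚ[ψ₁, ψ₂, Δ]/(ψ₁², ψ₂², 2Δψ₁ − ψ₁ψ₂, Δ(ψ₁ − ψ₂), 2Δ² + ψ₁ψ₂)` has ℚ-dimension 5,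
with linear basis `{1, ψ₁, ψ₂, Δ, ψ₁ψ₂}`.
-/

open MvPolynomial

noncomputable section

/-- The polynomial ring `ℚ[ψ₁, ψ₂, Δ]`. -/
abbrev P2 : Type := MvPolynomial (Fin 3) ℚ

/-- The ideal `(ψ₁², ψ₂², 2Δψ₁ − ψ₁ψ₂, Δ(ψ₁ − ψ₂), 2Δ² + ψ₁ψ₂)`,
where `ψ₁ = X 0`, `ψ₂ = X 1`, `Δ = X 2`. -/
def I2 : Ideal P2 := Ideal.span
  { (X 0 : P2) ^ 2, (X 1 : P2) ^ 2,
    2 * X 2 * X 0 - X 0 * X 1,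
    X 2 * (X 0 - X 1),
    2 * (X 2 : P2) ^ 2 + X 0 * X 1 }

abbrev R2 : Type := P2 ⧸ I2

def ψ₁ : R2 := Ideal.Quotient.mk I2 (X 0)
def ψ₂ : R2 := Ideal.Quotient.mk I2 (X 1)
def Δ2 : R2 := Ideal.Quotient.mk I2 (X 2)

/-! ### A five-dimensional model algebra -/

/-- A concrete 5-dimensional model of the quotient ring, with coordinates in the
basis `1, ψ₁, ψ₂, Δ, ψ₁ψ₂`. -/
@[ext] structure A5 where
  c0 : ℚ
  c1 : ℚ
  c2 : ℚ
  c3 : ℚ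
  c4 : ℚ

namespace A5

instance : Zero A5 := ⟨⟨0, 0, 0, 0, 0⟩⟩
instance : One A5 := ⟨⟨1, 0, 0, 0, 0⟩⟩
instance : Add A5 := ⟨fun a b => ⟨a.c0 + b.c0, a.c1 + b.c1, a.c2 + b.c2, a.c3 + b.c3, a.c4 + b.c4⟩⟩
instance : Neg A5 := ⟨fun a => ⟨-a.c0, -a.c1, -a.c2, -a.c3, -a.c4⟩⟩
instance : Mul A5 := ⟨fun a b =>
  ⟨a.c0 * b.c0,
   a.c0 * b.c1 + a.c1 * b.c0,
   a.c0 * b.c2 + a.c2 * b.c0,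
   a.c0 * b.c3 + a.c3 * b.c0,
   a.c0 * b.c4 + a.c4 * b.c0 + a.c1 * b.c2 + a.c2 * b.c1
     + (a.c1 * b.c3 + a.c3 * b.c1) / 2 + (a.c2 * b.c3 + a.c3 * b.c2) / 2
     - a.c3 * b.c3 / 2⟩⟩

lemma zero_def : (0 : A5) = ⟨0, 0, 0, 0, 0⟩ := rfl
lemma one_def : (1 : A5) = ⟨1, 0, 0, 0, 0⟩ := rfl
lemma add_def (a b : A5) :
    a + b = ⟨a.c0 + b.c0, a.c1 + b.c1, a.c2 + b.c2, a.c3 + b.c3, a.c4 + b.c4⟩ := rfl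
lemma neg_def (a : A5) : -a = ⟨-a.c0, -a.c1, -a.c2, -a.c3, -a.c4⟩ := rfl
lemma mul_def (a b : A5) :
    a * b =
      ⟨a.c0 * b.c0,
       a.c0 * b.c1 + a.c1 * b.c0,
       a.c0 * b.c2 + a.c2 * b.c0,
       a.c0 * b.c3 + a.c3 * b.c0,
       a.c0 * b.c4 + a.c4 * b.c0 + a.c1 * b.c2 + a.c2 * b.c1
         + (a.c1 * b.c3 + a.c3 * b.c1) / 2 + (a.c2 * b.c3 + a.c3 * b.c2) / 2
         - a.c3 * b.c3 / 2⟩ := rfl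

instance : CommRing A5 where
  add := (· + ·)
  add_assoc := by intros; ext <;> simp [add_def] <;> ring
  zero := 0
  zero_add := by intros; ext <;> simp [add_def, zero_def]
  add_zero := by intros; ext <;> simp [add_def, zero_def]
  add_comm := by intros; ext <;> simp [add_def] <;> ring
  nsmul := nsmulRec
  zsmul := zsmulRec
  neg := Neg.neg
  neg_add_cancel := by intros; ext <;> simp [add_def, neg_def, zero_def]
  mul := (· * ·)
  mul_assoc := by intros; ext <;> simp [mul_def] <;> ring
  one := 1
  one_mul := by intros; ext <;> simp [mul_def, one_def]
  mul_one := by intros; ext <;> simp [mul_def, one_def]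
  left_distrib := by intros; ext <;> simp [mul_def, add_def] <;> ring
  right_distrib := by intros; ext <;> simp [mul_def, add_def] <;> ring
  zero_mul := by intros; ext <;> simp [mul_def, zero_def]
  mul_zero := by intros; ext <;> simp [mul_def, zero_def]
  mul_comm := by intros; ext <;> simp [mul_def] <;> ring

lemma sub_def (a b : A5) :
    a - b = ⟨a.c0 - b.c0, a.c1 - b.c1, a.c2 - b.c2, a.c3 - b.c3, a.c4 - b.c4⟩ := by
  rw [sub_eq_add_neg]
  ext <;> simp [add_def, neg_def] <;> ring

lemma two_def : (2 : A5) = ⟨2, 0, 0, 0, 0⟩ := by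
  rw [show (2 : A5) = 1 + 1 from one_add_one_eq_two.symm]
  ext <;> simp [add_def, one_def] <;> norm_num

/-- The structure map `ℚ → A5`. -/
def ofQ : ℚ →+* A5 where
  toFun q := ⟨q, 0, 0, 0, 0⟩
  map_one' := rfl
  map_mul' := by intros; ext <;> simp [mul_def]
  map_zero' := rfl
  map_add' := by intros; ext <;> simp [add_def]

instance : Algebra ℚ A5 := ofQ.toAlgebra

lemma smul_def (q : ℚ) (a : A5) :
    q • a = ⟨q * a.c0, q * a.c1, q * a.c2, q * a.c3, q * a.c4⟩ := by
  rw [Algebra.smul_def, RingHom.algebraMap_toAlgebra]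
  ext <;> simp [ofQ, mul_def]

end A5

/-- The evaluation `ℚ[ψ₁,ψ₂,Δ] → A5`. -/
def φ2 : P2 →ₐ[ℚ] A5 :=
  MvPolynomial.aeval ![⟨0, 1, 0, 0, 0⟩, ⟨0, 0, 1, 0, 0⟩, ⟨0, 0, 0, 1, 0⟩]

lemma φ2_vanish : ∀ a ∈ I2, φ2 a = 0 := by
  have h : I2 ≤ RingHom.ker (φ2 : P2 →+* A5) := by
    rw [I2, Ideal.span_le]
    intro x hx
    simp only [Set.mem_insert_iff, Set.mem_singleton_iff] at hx
    rcases hx with rfl | rfl | rfl | rfl | rfl <;>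
    · simp only [SetLike.mem_coe, RingHom.mem_ker, RingHom.coe_coe, map_sub, map_add, map_mul,
        map_pow, map_ofNat, φ2, aeval_X, pow_two]
      ext <;>
        simp [A5.mul_def, A5.add_def, A5.neg_def, A5.zero_def, A5.one_def, A5.sub_def,
          A5.two_def, Matrix.cons_val_zero, Matrix.cons_val_one] <;> norm_num
  intro a ha
  exact h ha

/-- The induced map on the quotient. -/
def φ2bar : R2 →ₐ[ℚ] A5 := Ideal.Quotient.liftₐ I2 φ2 φ2_vanish

lemma φ2bar_mk (p : P2) : φ2bar (Ideal.Quotient.mk I2 p) = φ2 p := by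
  simp [φ2bar]
  rfl

/-! ### Relations in `R2` -/

section relations

lemma mk_zero_of_mem {p : P2} (h : p ∈ I2) : Ideal.Quotient.mk I2 p = 0 :=
  Ideal.Quotient.eq_zero_iff_mem.mpr h

lemma mem_gen₁ : ((X 0 : P2) ^ 2) ∈ I2 := Ideal.subset_span (by simp [I2])
lemma mem_gen₂ : ((X 1 : P2) ^ 2) ∈ I2 := Ideal.subset_span (by simp [I2])
lemma mem_gen₃ : (2 * X 2 * X 0 - X 0 * X 1 : P2) ∈ I2 := Ideal.subset_span (by simp [I2])
lemma mem_gen₄ : (X 2 * (X 0 - X 1) : P2) ∈ I2 := Ideal.subset_span (by simp [I2])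
lemma mem_gen₅ : (2 * (X 2 : P2) ^ 2 + X 0 * X 1) ∈ I2 := Ideal.subset_span (by simp [I2])

lemma rel₁ : ψ₁ * ψ₁ = 0 := by
  have := mk_zero_of_mem mem_gen₁
  rwa [pow_two, map_mul] at this

lemma rel₂ : ψ₂ * ψ₂ = 0 := by
  have := mk_zero_of_mem mem_gen₂
  rwa [pow_two, map_mul] at this

lemma rel₃ : 2 * (Δ2 * ψ₁) = ψ₁ * ψ₂ := by
  have := mk_zero_of_mem mem_gen₃
  rw [map_sub, map_mul, map_mul, map_mul, map_ofNat, sub_eq_zero] at this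
  rw [← mul_assoc]
  exact this

lemma rel₄ : Δ2 * ψ₁ = Δ2 * ψ₂ := by
  have := mk_zero_of_mem mem_gen₄
  rw [map_mul, map_sub, mul_sub, sub_eq_zero] at this
  exact this

lemma rel₅ : 2 * (Δ2 * Δ2) = -(ψ₁ * ψ₂) := by
  have := mk_zero_of_mem mem_gen₅
  rw [map_add, map_mul, map_mul, map_pow, map_ofNat, pow_two] at this
  exact eq_neg_of_add_eq_zero_left this

lemma half_smul {x y : R2} (h : 2 * x = y) : x = (1 / 2 : ℚ) • y := by
  rw [← h, show (2 : R2) * x = (2 : ℚ) • x from by rw [two_smul ℚ x, two_mul], smul_smul]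
  norm_num

lemma relΔψ₁ : Δ2 * ψ₁ = (1 / 2 : ℚ) • (ψ₁ * ψ₂) := half_smul rel₃

lemma relΔψ₂ : Δ2 * ψ₂ = (1 / 2 : ℚ) • (ψ₁ * ψ₂) := rel₄ ▸ relΔψ₁

lemma relΔΔ : Δ2 * Δ2 = (1 / 2 : ℚ) • (-(ψ₁ * ψ₂)) := half_smul rel₅

lemma relψ₁e : ψ₁ * (ψ₁ * ψ₂) = 0 := by rw [← mul_assoc, rel₁, zero_mul]

lemma relψ₂e : ψ₂ * (ψ₁ * ψ₂) = 0 := by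
  rw [show ψ₂ * (ψ₁ * ψ₂) = ψ₁ * (ψ₂ * ψ₂) by ring, rel₂, mul_zero]

lemma relΔe : Δ2 * (ψ₁ * ψ₂) = 0 := by
  rw [← mul_assoc, relΔψ₁, smul_mul_assoc, mul_assoc, rel₂, mul_zero, smul_zero]

lemma relee : (ψ₁ * ψ₂) * (ψ₁ * ψ₂) = 0 := by
  rw [show (ψ₁ * ψ₂) * (ψ₁ * ψ₂) = ψ₁ * (ψ₂ * (ψ₁ * ψ₂)) by ring, relψ₂e, mul_zero]

end relations

/-! ### The spanning set -/

def Sset : Set R2 := {1, ψ₁, ψ₂, Δ2, ψ₁ * ψ₂}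

def S2 : Submodule ℚ R2 := Submodule.span ℚ Sset

lemma mem_one : (1 : R2) ∈ S2 := Submodule.subset_span (by simp [Sset])
lemma mem_ψ₁ : ψ₁ ∈ S2 := Submodule.subset_span (by simp [Sset])
lemma mem_ψ₂ : ψ₂ ∈ S2 := Submodule.subset_span (by simp [Sset])
lemma mem_Δ : Δ2 ∈ S2 := Submodule.subset_span (by simp [Sset])
lemma mem_e : ψ₁ * ψ₂ ∈ S2 := Submodule.subset_span (by simp [Sset])

lemma mul_basic_mem : ∀ a ∈ Sset, ∀ b ∈ Sset, a * b ∈ S2 := by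
  intro a ha b hb
  simp only [Sset, Set.mem_insert_iff, Set.mem_singleton_iff] at ha hb
  rcases ha with rfl | rfl | rfl | rfl | rfl <;>
    rcases hb with rfl | rfl | rfl | rfl | rfl
  · rw [one_mul]; exact mem_one
  · rw [one_mul]; exact mem_ψ₁
  · rw [one_mul]; exact mem_ψ₂
  · rw [one_mul]; exact mem_Δ
  · rw [one_mul]; exact mem_e
  · rw [mul_one]; exact mem_ψ₁
  · rw [rel₁]; exact S2.zero_mem
  · exact mem_e
  · rw [mul_comm, relΔψ₁]; exact S2.smul_mem _ mem_e
  · rw [relψ₁e]; exact S2.zero_mem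
  · rw [mul_one]; exact mem_ψ₂
  · rw [mul_comm]; exact mem_e
  · rw [rel₂]; exact S2.zero_mem
  · rw [mul_comm, relΔψ₂]; exact S2.smul_mem _ mem_e
  · rw [relψ₂e]; exact S2.zero_mem
  · rw [mul_one]; exact mem_Δ
  · rw [relΔψ₁]; exact S2.smul_mem _ mem_e
  · rw [relΔψ₂]; exact S2.smul_mem _ mem_e
  · rw [relΔΔ]; exact S2.smul_mem _ (S2.neg_mem mem_e)
  · rw [relΔe]; exact S2.zero_mem
  · rw [mul_one]; exact mem_e
  · rw [mul_comm, relψ₁e]; exact S2.zero_mem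
  · rw [mul_comm, relψ₂e]; exact S2.zero_mem
  · rw [mul_comm, relΔe]; exact S2.zero_mem
  · rw [relee]; exact S2.zero_mem

lemma S2_mul_le : S2 * S2 ≤ S2 := by
  rw [S2, Submodule.span_mul_span]
  rw [Submodule.span_le]
  rintro x ⟨a, ha, b, hb, rfl⟩
  exact mul_basic_mem a ha b hb

lemma mul_mem_S2 {a b : R2} (ha : a ∈ S2) (hb : b ∈ S2) : a * b ∈ S2 :=
  S2_mul_le (Submodule.mul_mem_mul ha hb)

lemma S2_eq_top : ∀ x : R2, x ∈ S2 := by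
  intro x
  obtain ⟨p, rfl⟩ := Ideal.Quotient.mk_surjective x
  induction p using MvPolynomial.induction_on with
  | C a =>
      have h : (Ideal.Quotient.mk I2) (C a) = a • (1 : R2) := by
        rw [show (C a : P2) = a • (1 : P2) by rw [MvPolynomial.smul_eq_C_mul, mul_one]]
        rw [← Ideal.Quotient.mkₐ_eq_mk ℚ I2, map_smul, map_one]
      rw [h]
      exact S2.smul_mem _ mem_one
  | add p q hp hq =>
      rw [map_add]; exact S2.add_mem hp hq
  | mul_X p i hp =>
      rw [map_mul]
      refine mul_mem_S2 hp ?_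
      fin_cases i
      · exact mem_ψ₁
      · exact mem_ψ₂
      · exact mem_Δ

/-! ### The basis -/

def vfam : Fin 5 → R2 := ![1, ψ₁, ψ₂, Δ2, ψ₁ * ψ₂]

lemma vfam_span : ⊤ ≤ Submodule.span ℚ (Set.range vfam) := by
  intro x _
  refine Submodule.span_le.mpr ?_ (S2_eq_top x)
  intro y hy
  simp only [Sset, Set.mem_insert_iff, Set.mem_singleton_iff] at hy
  rcases hy with rfl | rfl | rfl | rfl | rfl
  · exact Submodule.subset_span ⟨0, rfl⟩
  · exact Submodule.subset_span ⟨1, rfl⟩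
  · exact Submodule.subset_span ⟨2, rfl⟩
  · exact Submodule.subset_span ⟨3, rfl⟩
  · exact Submodule.subset_span ⟨4, rfl⟩

def ufam : Fin 5 → A5 :=
  ![⟨1, 0, 0, 0, 0⟩, ⟨0, 1, 0, 0, 0⟩, ⟨0, 0, 1, 0, 0⟩, ⟨0, 0, 0, 1, 0⟩, ⟨0, 0, 0, 0, 1⟩]

lemma φ2bar_vfam (i : Fin 5) : φ2bar (vfam i) = ufam i := by
  fin_cases i
  · show φ2bar 1 = ufam 0
    rw [map_one]
    ext <;> rfl
  · show φ2bar ψ₁ = _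
    rw [ψ₁, φ2bar_mk, φ2, aeval_X]
    rfl
  · show φ2bar ψ₂ = _
    rw [ψ₂, φ2bar_mk, φ2, aeval_X]
    rfl
  · show φ2bar Δ2 = _
    rw [Δ2, φ2bar_mk, φ2, aeval_X]
    rfl
  · show φ2bar (ψ₁ * ψ₂) = _
    rw [map_mul, ψ₁, ψ₂, φ2bar_mk, φ2bar_mk, φ2, aeval_X, aeval_X]
    show (![_, _, _] 0 : A5) * ![_, _, _] 1 = _
    simp only [Matrix.cons_val_zero, Matrix.cons_val_one, Matrix.head_cons]
    ext <;> simp [A5.mul_def, ufam] <;> norm_num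

lemma vfam_indep : LinearIndependent ℚ vfam := by
  apply LinearIndependent.of_comp φ2bar.toLinearMap
  have hcomp : (φ2bar.toLinearMap ∘ vfam) = ufam := by
    funext i
    exact φ2bar_vfam i
  rw [hcomp, Fintype.linearIndependent_iff]
  intro g hg
  rw [Fin.sum_univ_five] at hg
  simp only [ufam, Matrix.cons_val_zero, Matrix.cons_val_one, Matrix.head_cons,
    Matrix.cons_val_two, Matrix.tail_cons, Matrix.cons_val_three, Matrix.cons_val_four,
    A5.smul_def, A5.add_def, A5.zero_def, A5.mk.injEq] at hg
  obtain ⟨h0, h1, h2, h3, h4⟩ := hg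
  intro i
  fin_cases i <;> simp_all

def bas : Module.Basis (Fin 5) ℚ R2 := Module.Basis.mk vfam_indep vfam_span

theorem chow_ring_CxC :
    Module.finrank ℚ R2 = 5 ∧
    ∃ b : Module.Basis (Fin 5) ℚ R2,
      ∀ i : Fin 5, b i = ![1, ψ₁, ψ₂, Δ2, ψ₁ * ψ₂] i := by
  constructor
  · rw [Module.finrank_eq_card_basis bas]
    simp
  · exact ⟨bas, fun i => Module.Basis.mk_apply vfam_indep vfam_span i⟩

end
end

section
/- Let R = Q[H, Θ]/(H³ + H²Θ + (1/2)HΘ², H²Θ², Θ³), with H, Θ in degree 1. Then the graded pieces of R have Q-dimensions 1, 2, 3, 2 in degrees 0, 1, 2, 3 and vanish in degrees ≥ 4, with degree-3 basis {H²Θ, HΘ²}. -/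
/-!
Excision lemma (algebraic part): in `R = ℚ[H, Θ]/(H³ + H²Θ + (1/2)HΘ², H²Θ², Θ³)`,
the graded pieces have dimensions 1, 2, 3, 2 in degrees 0, 1, 2, 3 and vanish in
degrees ≥ 4, with degree-3 basis `{H²Θ, HΘ²}`.
-/

open MvPolynomial

noncomputable section

/-- The polynomial ring `ℚ[H, Θ]` with `H = X 0`, `Θ = X 1`. -/
abbrev P11 : Type := MvPolynomial (Fin 2) ℚ

/-- The ideal `(H³ + H²Θ + (1/2)HΘ², H²Θ², Θ³)`. -/
def I11 : Ideal P11 := Ideal.span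
  { (X 0 : P11) ^ 3 + (X 0) ^ 2 * X 1 + C (1 / 2 : ℚ) * X 0 * (X 1) ^ 2,
    (X 0 : P11) ^ 2 * (X 1) ^ 2,
    (X 1 : P11) ^ 3 }

abbrev R11 : Type := P11 ⧸ I11

def H11 : R11 := Ideal.Quotient.mk I11 (X 0)
def Θ11 : R11 := Ideal.Quotient.mk I11 (X 1)

/-- The degree-`d` graded piece of `R11`: the span of the images of the degree-`d`
monomials in `H` and `Θ`. -/
def gradedPiece11 (d : ℕ) : Submodule ℚ R11 :=
  Submodule.span ℚ ((fun p : ℕ × ℕ => H11 ^ p.1 * Θ11 ^ p.2) '' {p | p.1 + p.2 = d})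

namespace ChowAux

def ev (a b : ℕ) : Fin 2 →₀ ℕ := Finsupp.single 0 a + Finsupp.single 1 b

lemma ev_apply0 (a b : ℕ) : ev a b 0 = a := by
  simp [ev, Finsupp.single_apply]

lemma ev_apply1 (a b : ℕ) : ev a b 1 = b := by
  simp [ev, Finsupp.single_apply]

lemma ev_le_iff (a b c d : ℕ) : ev a b ≤ ev c d ↔ a ≤ c ∧ b ≤ d := by
  rw [Finsupp.le_def]
  constructor
  · intro h; exact ⟨by simpa [ev_apply0] using h 0, by simpa [ev_apply1] using h 1⟩
  · rintro ⟨h1, h2⟩ i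
    fin_cases i <;> simpa [ev_apply0, ev_apply1]

lemma ev_eq_iff (a b c d : ℕ) : ev a b = ev c d ↔ a = c ∧ b = d := by
  constructor
  · intro h
    exact ⟨by rw [← ev_apply0 a b, h, ev_apply0], by rw [← ev_apply1 a b, h, ev_apply1]⟩
  · rintro ⟨rfl, rfl⟩; rfl

lemma ev_sub (a b c d : ℕ) : ev c d - ev a b = ev (c - a) (d - b) := by
  ext i
  fin_cases i <;> simp [Finsupp.tsub_apply, ev_apply0, ev_apply1]

lemma Xab (a b : ℕ) : (X 0 : P11) ^ a * (X 1) ^ b = monomial (ev a b) 1 := by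
  rw [X_pow_eq_monomial, X_pow_eq_monomial, monomial_mul, one_mul]; rfl

lemma coeff_Xab (c d a b : ℕ) :
    coeff (ev c d) ((X 0 : P11) ^ a * (X 1) ^ b) = if a = c ∧ b = d then 1 else 0 := by
  simp only [Xab, coeff_monomial, ev_eq_iff]

lemma coeff_mul_mon (p : P11) (r : ℚ) (a b c d : ℕ) :
    coeff (ev c d) (p * monomial (ev a b) r) =
      if a ≤ c ∧ b ≤ d then coeff (ev (c - a) (d - b)) p * r else 0 := by
  rw [coeff_mul_monomial']
  simp only [ev_le_iff, ev_sub]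

def coords (j : Fin 8) : P11 →ₗ[ℚ] ℚ :=
  match j with
  | ⟨0, _⟩ => lcoeff ℚ (ev 0 0)
  | ⟨1, _⟩ => lcoeff ℚ (ev 1 0)
  | ⟨2, _⟩ => lcoeff ℚ (ev 0 1)
  | ⟨3, _⟩ => lcoeff ℚ (ev 2 0)
  | ⟨4, _⟩ => lcoeff ℚ (ev 1 1)
  | ⟨5, _⟩ => lcoeff ℚ (ev 0 2)
  | ⟨6, _⟩ => lcoeff ℚ (ev 2 1) - lcoeff ℚ (ev 3 0)
  | ⟨7, _⟩ => lcoeff ℚ (ev 1 2) - (1 / 2 : ℚ) • lcoeff ℚ (ev 3 0)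

def L : P11 →ₗ[ℚ] (Fin 8 → ℚ) := LinearMap.pi coords

lemma g1_eq : (X 0 : P11) ^ 3 + (X 0) ^ 2 * X 1 + C (1 / 2 : ℚ) * X 0 * (X 1) ^ 2 =
    monomial (ev 3 0) 1 + monomial (ev 2 1) 1 + monomial (ev 1 2) (1 / 2 : ℚ) := by
  have h1 : (X 0 : P11) ^ 3 = (X 0 : P11) ^ 3 * (X 1) ^ 0 := by ring
  have h2 : (X 0 : P11) ^ 2 * X 1 = (X 0 : P11) ^ 2 * (X 1) ^ 1 := by ring
  have h3 : C (1 / 2 : ℚ) * X 0 * (X 1) ^ 2 = C (1 / 2 : ℚ) * ((X 0 : P11) ^ 1 * (X 1) ^ 2) := by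
    ring
  rw [h1, h2, h3, Xab, Xab, Xab, C_mul_monomial, mul_one]

lemma g2_eq : (X 0 : P11) ^ 2 * (X 1) ^ 2 = monomial (ev 2 2) 1 := Xab 2 2

lemma g3_eq : (X 1 : P11) ^ 3 = monomial (ev 0 3) 1 := by
  have : (X 1 : P11) ^ 3 = (X 0 : P11) ^ 0 * (X 1) ^ 3 := by ring
  rw [this, Xab]

lemma key (p : P11) (g : P11)
    (hg : g ∈ ({(X 0 : P11) ^ 3 + (X 0) ^ 2 * X 1 + C (1 / 2 : ℚ) * X 0 * (X 1) ^ 2,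
      (X 0 : P11) ^ 2 * (X 1) ^ 2, (X 1 : P11) ^ 3} : Set P11)) :
    L (p * g) = 0 := by
  simp only [Set.mem_insert_iff, Set.mem_singleton_iff] at hg
  funext j
  rcases hg with rfl | rfl | rfl <;>
  · rw [show (p * _ : P11) = _ from congrArg (p * ·) (by first | exact g1_eq | exact g2_eq | exact g3_eq)]
    fin_cases j <;>
      simp [L, coords, mul_add, coeff_mul_mon] <;> ring

lemma L_ker : ∀ x ∈ I11, L x = 0 := by
  intro x hx
  have main : ∀ a : P11, L (a * x) = 0 := by
    refine Submodule.span_induction (p := fun x _ => ∀ a : P11, L (a * x) = 0)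
      (fun g hg a => key a g hg) (by simp) ?_ ?_ hx
    · intro y z _ _ hy hz a
      rw [mul_add, map_add, hy, hz, add_zero]
    · intro b y _ hy a
      rw [smul_eq_mul, show a * (b * y) = (a * b) * y by ring, hy]
  simpa using main 1

def Lbar : R11 →ₗ[ℚ] (Fin 8 → ℚ) :=
  (Submodule.liftQ (Submodule.restrictScalars ℚ I11) L
      (fun x hx => L_ker x hx)).comp
    (Submodule.Quotient.restrictScalarsEquiv ℚ I11).symm.toLinearMap

lemma Lbar_mk (p : P11) : Lbar (Ideal.Quotient.mk I11 p) = L p := rfl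

lemma Lmon (a b : ℕ) : Lbar (H11 ^ a * Θ11 ^ b) = L ((X 0 : P11) ^ a * (X 1) ^ b) := by
  rw [H11, Θ11, ← map_pow, ← map_pow, ← map_mul, Lbar_mk]

def mIdx (j : Fin 8) : ℕ × ℕ :=
  match j with
  | ⟨0,_⟩ => (0,0) | ⟨1,_⟩ => (1,0) | ⟨2,_⟩ => (0,1) | ⟨3,_⟩ => (2,0)
  | ⟨4,_⟩ => (1,1) | ⟨5,_⟩ => (0,2) | ⟨6,_⟩ => (2,1) | ⟨7,_⟩ => (1,2)

lemma Lval (k : Fin 8) :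
    Lbar (H11 ^ (mIdx k).1 * Θ11 ^ (mIdx k).2) = Pi.single k 1 := by
  funext j
  rw [Lmon]
  fin_cases k <;> fin_cases j <;>
    simp only [mIdx, L, coords, LinearMap.pi_apply, LinearMap.sub_apply,
      LinearMap.smul_apply, lcoeff_apply, coeff_Xab, smul_eq_mul] <;>
    norm_num [Pi.single_apply, Fin.ext_iff]

lemma indep_of {n : ℕ} (v : Fin n → R11) (g : Fin n → Fin 8) (hg : Function.Injective g)
    (hv : ∀ i, Lbar (v i) = Pi.single (g i) 1) : LinearIndependent ℚ v := by
  have h1 : LinearIndependent ℚ fun i : Fin 8 => Pi.single i (1 : ℚ) := by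
    have := (Pi.basisFun ℚ (Fin 8)).linearIndependent
    rwa [show ⇑(Pi.basisFun ℚ (Fin 8)) = fun i => Pi.single i (1 : ℚ) from
      funext fun i => Pi.basisFun_apply ℚ (Fin 8) i] at this
  refine LinearIndependent.of_comp Lbar ?_
  rw [show Lbar ∘ v = fun i => Pi.single (g i) (1 : ℚ) from funext hv]
  exact h1.comp g hg

def v0 : Fin 1 → R11 := ![H11 ^ 0 * Θ11 ^ 0]
def v1 : Fin 2 → R11 := ![H11 ^ 1 * Θ11 ^ 0, H11 ^ 0 * Θ11 ^ 1]
def v2 : Fin 3 → R11 := ![H11 ^ 2 * Θ11 ^ 0, H11 ^ 1 * Θ11 ^ 1, H11 ^ 0 * Θ11 ^ 2]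
def v3 : Fin 2 → R11 := ![H11 ^ 2 * Θ11 ^ 1, H11 ^ 1 * Θ11 ^ 2]

lemma ind0 : LinearIndependent ℚ v0 := by
  refine indep_of v0 ![0] (by decide) ?_
  intro i; fin_cases i; exact Lval 0

lemma ind1 : LinearIndependent ℚ v1 := by
  refine indep_of v1 ![1, 2] (by decide) ?_
  intro i; fin_cases i
  exacts [Lval 1, Lval 2]

lemma ind2 : LinearIndependent ℚ v2 := by
  refine indep_of v2 ![3, 4, 5] (by decide) ?_
  intro i; fin_cases i
  exacts [Lval 3, Lval 4, Lval 5]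

lemma ind3 : LinearIndependent ℚ v3 := by
  refine indep_of v3 ![6, 7] (by decide) ?_
  intro i; fin_cases i
  exacts [Lval 6, Lval 7]

def c11 : R11 := Ideal.Quotient.mk I11 (C (1 / 2 : ℚ))

lemma e1 : H11 ^ 3 + H11 ^ 2 * Θ11 + c11 * H11 * Θ11 ^ 2 = 0 := by
  rw [H11, Θ11, c11, ← map_pow, ← map_pow, ← map_pow, ← map_mul, ← map_mul, ← map_mul,
    ← map_add, ← map_add]
  exact Ideal.Quotient.eq_zero_iff_mem.2 (Ideal.subset_span (by simp))

lemma e2 : H11 ^ 2 * Θ11 ^ 2 = 0 := by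
  rw [H11, Θ11, ← map_pow, ← map_pow, ← map_mul]
  exact Ideal.Quotient.eq_zero_iff_mem.2 (Ideal.subset_span (by simp))

lemma e3 : Θ11 ^ 3 = 0 := by
  rw [Θ11, ← map_pow]
  exact Ideal.Quotient.eq_zero_iff_mem.2 (Ideal.subset_span (by simp))

lemma h31 : H11 ^ 3 * Θ11 = 0 := by
  linear_combination Θ11 * e1 - e2 - (c11 * H11) * e3

lemma h40 : H11 ^ 4 = 0 := by
  linear_combination H11 * e1 - h31 - c11 * e2

lemma zero4 : ∀ a b : ℕ, a + b = 4 → H11 ^ a * Θ11 ^ b = 0 := by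
  intro a b h
  rcases (by omega : a = 4 ∧ b = 0 ∨ a = 3 ∧ b = 1 ∨ a = 2 ∧ b = 2 ∨ a = 1 ∧ b = 3 ∨
      a = 0 ∧ b = 4) with ⟨rfl, rfl⟩ | ⟨rfl, rfl⟩ | ⟨rfl, rfl⟩ | ⟨rfl, rfl⟩ | ⟨rfl, rfl⟩
  · rw [pow_zero, mul_one]; exact h40
  · rw [pow_one]; exact h31
  · exact e2
  · rw [pow_one, e3, mul_zero]
  · rw [pow_zero, one_mul, show Θ11 ^ 4 = Θ11 * Θ11 ^ 3 from by ring, e3, mul_zero]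

lemma zero_ge4 : ∀ a b : ℕ, 4 ≤ a + b → H11 ^ a * Θ11 ^ b = 0 := by
  have key : ∀ a' b' i j : ℕ, i + j = 4 → H11 ^ (a' + i) * Θ11 ^ (b' + j) = 0 := by
    intro a' b' i j hij
    have h4 : H11 ^ i * Θ11 ^ j = 0 := zero4 i j hij
    calc H11 ^ (a' + i) * Θ11 ^ (b' + j)
        = (H11 ^ a' * Θ11 ^ b') * (H11 ^ i * Θ11 ^ j) := by rw [pow_add, pow_add]; ring
      _ = 0 := by rw [h4, mul_zero]
  intro a b h
  rcases le_or_gt 4 a with ha | ha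
  · obtain ⟨a', rfl⟩ : ∃ a', a = a' + 4 := ⟨a - 4, by omega⟩
    simpa using key a' b 4 0 rfl
  · obtain ⟨b', rfl⟩ : ∃ b', b = b' + (4 - a) := ⟨b - (4 - a), by omega⟩
    simpa using key 0 b' a (4 - a) (by omega)

lemma c11_eq : c11 = (1 / 2 : ℚ) • (1 : R11) := by
  have h : (C (1 / 2 : ℚ) : P11) = (1 / 2 : ℚ) • (1 : P11) := by
    rw [MvPolynomial.smul_eq_C_mul, mul_one]
  rw [c11, ← Ideal.Quotient.mkₐ_eq_mk ℚ, h, map_smul, map_one]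

lemma c11_smul (x : R11) : c11 * x = (1 / 2 : ℚ) • x := by
  rw [c11_eq, smul_mul_assoc, one_mul]

lemma piece0 : gradedPiece11 0 = Submodule.span ℚ (Set.range v0) := by
  apply le_antisymm
  · rw [gradedPiece11, Submodule.span_le]
    rintro x ⟨⟨a, b⟩, hp, rfl⟩
    simp only [Set.mem_setOf_eq] at hp
    obtain ⟨rfl, rfl⟩ : a = 0 ∧ b = 0 := by omega
    exact Submodule.subset_span ⟨0, rfl⟩
  · rw [Submodule.span_le]
    rintro x ⟨i, rfl⟩
    fin_cases i
    exact Submodule.subset_span ⟨(0, 0), rfl, rfl⟩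

lemma piece1 : gradedPiece11 1 = Submodule.span ℚ (Set.range v1) := by
  apply le_antisymm
  · rw [gradedPiece11, Submodule.span_le]
    rintro x ⟨⟨a, b⟩, hp, rfl⟩
    simp only [Set.mem_setOf_eq] at hp
    rcases (by omega : a = 1 ∧ b = 0 ∨ a = 0 ∧ b = 1) with ⟨rfl, rfl⟩ | ⟨rfl, rfl⟩
    · exact Submodule.subset_span ⟨0, rfl⟩
    · exact Submodule.subset_span ⟨1, rfl⟩
  · rw [Submodule.span_le]
    rintro x ⟨i, rfl⟩
    fin_cases i
    · exact Submodule.subset_span ⟨(1, 0), rfl, rfl⟩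
    · exact Submodule.subset_span ⟨(0, 1), rfl, rfl⟩

lemma piece2 : gradedPiece11 2 = Submodule.span ℚ (Set.range v2) := by
  apply le_antisymm
  · rw [gradedPiece11, Submodule.span_le]
    rintro x ⟨⟨a, b⟩, hp, rfl⟩
    simp only [Set.mem_setOf_eq] at hp
    rcases (by omega : a = 2 ∧ b = 0 ∨ a = 1 ∧ b = 1 ∨ a = 0 ∧ b = 2) with
      ⟨rfl, rfl⟩ | ⟨rfl, rfl⟩ | ⟨rfl, rfl⟩
    · exact Submodule.subset_span ⟨0, rfl⟩
    · exact Submodule.subset_span ⟨1, rfl⟩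
    · exact Submodule.subset_span ⟨2, rfl⟩
  · rw [Submodule.span_le]
    rintro x ⟨i, rfl⟩
    fin_cases i
    · exact Submodule.subset_span ⟨(2, 0), rfl, rfl⟩
    · exact Submodule.subset_span ⟨(1, 1), rfl, rfl⟩
    · exact Submodule.subset_span ⟨(0, 2), rfl, rfl⟩

lemma piece3 : gradedPiece11 3 = Submodule.span ℚ (Set.range v3) := by
  apply le_antisymm
  · rw [gradedPiece11, Submodule.span_le]
    rintro x ⟨⟨a, b⟩, hp, rfl⟩
    simp only [Set.mem_setOf_eq] at hp
    rcases (by omega : a = 3 ∧ b = 0 ∨ a = 2 ∧ b = 1 ∨ a = 1 ∧ b = 2 ∨ a = 0 ∧ b = 3) with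
      ⟨rfl, rfl⟩ | ⟨rfl, rfl⟩ | ⟨rfl, rfl⟩ | ⟨rfl, rfl⟩
    · show H11 ^ 3 * Θ11 ^ 0 ∈ (Submodule.span ℚ (Set.range v3) : Set R11)
      have hH3 : H11 ^ 3 * Θ11 ^ 0 =
          -(H11 ^ 2 * Θ11 ^ 1) - (1 / 2 : ℚ) • (H11 ^ 1 * Θ11 ^ 2) := by
        rw [← c11_smul]
        linear_combination e1
      rw [hH3]
      exact Submodule.sub_mem _
        (Submodule.neg_mem _ (Submodule.subset_span ⟨0, rfl⟩))
        (Submodule.smul_mem _ _ (Submodule.subset_span ⟨1, rfl⟩))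
    · exact Submodule.subset_span ⟨0, rfl⟩
    · exact Submodule.subset_span ⟨1, rfl⟩
    · show H11 ^ 0 * Θ11 ^ 3 ∈ (Submodule.span ℚ (Set.range v3) : Set R11)
      rw [pow_zero, one_mul, e3]
      exact Submodule.zero_mem _
  · rw [Submodule.span_le]
    rintro x ⟨i, rfl⟩
    fin_cases i
    · exact Submodule.subset_span ⟨(2, 1), rfl, rfl⟩
    · exact Submodule.subset_span ⟨(1, 2), rfl, rfl⟩

lemma pieceBot (d : ℕ) (hd : 4 ≤ d) : gradedPiece11 d = ⊥ := by
  rw [eq_bot_iff, gradedPiece11, Submodule.span_le]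
  rintro x ⟨⟨a, b⟩, hp, rfl⟩
  simp only [Set.mem_setOf_eq] at hp
  have h0 : H11 ^ a * Θ11 ^ b = 0 := zero_ge4 a b (by omega)
  simp [h0]

end ChowAux

theorem chow_ring_excised :
    Module.finrank ℚ (gradedPiece11 0) = 1 ∧
    Module.finrank ℚ (gradedPiece11 1) = 2 ∧
    Module.finrank ℚ (gradedPiece11 2) = 3 ∧
    Module.finrank ℚ (gradedPiece11 3) = 2 ∧
    (∀ d, 4 ≤ d → gradedPiece11 d = ⊥) ∧
    (∃ b : Module.Basis (Fin 2) ℚ (gradedPiece11 3),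
        (b 0 : R11) = H11 ^ 2 * Θ11 ∧ (b 1 : R11) = H11 * Θ11 ^ 2) := by
  refine ⟨?_, ?_, ?_, ?_, fun d hd => ChowAux.pieceBot d hd, ?_⟩
  · rw [ChowAux.piece0, finrank_span_eq_card ChowAux.ind0]
    simp
  · rw [ChowAux.piece1, finrank_span_eq_card ChowAux.ind1]
    simp
  · rw [ChowAux.piece2, finrank_span_eq_card ChowAux.ind2]
    simp
  · rw [ChowAux.piece3, finrank_span_eq_card ChowAux.ind3]
    simp
  · refine ⟨(Module.Basis.span ChowAux.ind3).map (LinearEquiv.ofEq _ _ ChowAux.piece3.symm), ?_, ?_⟩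
    · rw [Module.Basis.map_apply, LinearEquiv.coe_ofEq_apply, Module.Basis.span_apply]
      show ChowAux.v3 0 = _
      simp [ChowAux.v3, pow_one]
    · rw [Module.Basis.map_apply, LinearEquiv.coe_ofEq_apply, Module.Basis.span_apply]
      show ChowAux.v3 1 = _
      simp [ChowAux.v3, pow_one]

end
end
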